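/- arXiv:2402.01892 — 5 statements merged into one kernel-verified Lean document; each statement's English description precedes it below -/
import Mathlib

section
/- For a random variable X with strictly increasing continuous CDF F, the function λ ↦ λ + (1/(1-α))·E[max(X − λ, 0)] is minimized at λ* equal to the α-quantile of X, i.e., the unique λ* with F(λ*) = α. -/
/-!
The map `λ ↦ (x - λ)⁺` has `-1{x > λ*}` as a subgradient at `λ*`, so
`E(X - λ*)⁺ ≤ E(X - λ)⁺ + (λ - λ*) ℙ(X > λ*)` for every `λ`. When `F λ* = α` we have
`ℙ(X > λ*) = 1 - α`, and dividing by `1 - α` gives exactly `g λ* ≤ g λ`.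
-/

open MeasureTheory Set

lemma max_sub_zero_le_max_sub_zero_add_ite (x a b : ℝ) :
    max (x - a) 0 ≤ max (x - b) 0 + if a < x then b - a else 0 := by
  split_ifs with h
  · have := le_max_left (x - b) 0
    rw [max_eq_left (by linarith)]
    linarith
  · have := le_max_right (x - b) 0
    rw [max_eq_right (by linarith)]
    linarith

lemma integral_max_sub_zero_le {Ω : Type*} [MeasurableSpace Ω] {μ : Measure Ω}
    [IsFiniteMeasure μ] {X : Ω → ℝ} (hX : Integrable X μ) (a b : ℝ) :
    ∫ ω, max (X ω - a) 0 ∂μ ≤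
      ∫ ω, max (X ω - b) 0 ∂μ + (b - a) * μ.real {ω | a < X ω} := by
  set s := {ω | a < X ω}
  have hs : NullMeasurableSet s μ := nullMeasurableSet_lt aemeasurable_const hX.aemeasurable
  have hpos (c : ℝ) : Integrable (fun ω => max (X ω - c) 0) μ :=
    (hX.sub (integrable_const c)).pos_part
  have hind : Integrable (s.indicator fun _ => b - a) μ :=
    (integrable_const _).indicator₀ hs
  calc ∫ ω, max (X ω - a) 0 ∂μ
      ≤ ∫ ω, max (X ω - b) 0 + s.indicator (fun _ => b - a) ω ∂μ :=
        integral_mono (hpos a) ((hpos b).add hind)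
          fun ω => max_sub_zero_le_max_sub_zero_add_ite (X ω) a b
    _ = ∫ ω, max (X ω - b) 0 ∂μ + (b - a) * μ.real s := by
        rw [integral_add (hpos b) hind, integral_indicator₀ hs, setIntegral_const, smul_eq_mul,
          mul_comm]

lemma probReal_lt_eq_one_sub {Ω : Type*} [MeasurableSpace Ω] {μ : Measure Ω}
    [IsProbabilityMeasure μ] {X : Ω → ℝ} (hX : AEMeasurable X μ) (a : ℝ) :
    μ.real {ω | a < X ω} = 1 - μ.real {ω | X ω ≤ a} := by
  have hs : NullMeasurableSet {ω | X ω ≤ a} μ := nullMeasurableSet_le hX aemeasurable_const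
  rw [← probReal_compl_eq_one_sub₀ hs]
  congr 1
  ext ω
  simp

theorem stmt1_general {Ω : Type*} [MeasurableSpace Ω] (ℙ : Measure Ω) [IsProbabilityMeasure ℙ]
    (X : Ω → ℝ) (hX : Integrable X ℙ) (α : ℝ) (hα : α ∈ Ioo (0 : ℝ) 1)
    (F : ℝ → ℝ) (hF : ∀ x, F x = (ℙ {ω | X ω ≤ x}).toReal)
    (lamStar : ℝ) (hlam : F lamStar = α) :
    ∀ lam : ℝ,
      lamStar + (1 - α)⁻¹ * ∫ ω, max (X ω - lamStar) 0 ∂ℙ ≤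
        lam + (1 - α)⁻¹ * ∫ ω, max (X ω - lam) 0 ∂ℙ := by
  intro lam
  have h1α : 0 < 1 - α := sub_pos.2 hα.2
  have htail : ℙ.real {ω | lamStar < X ω} = 1 - α := by
    rw [probReal_lt_eq_one_sub hX.aemeasurable, measureReal_def, ← hF, hlam]
  have key := integral_max_sub_zero_le hX lamStar lam
  rw [htail] at key
  have := mul_le_mul_of_nonneg_left key (inv_pos.2 h1α).le
  rw [mul_add, mul_left_comm, inv_mul_cancel₀ h1α.ne', mul_one] at this
  linarith

/-- For an integrable random variable `X` with continuous, strictly increasing CDF `F`,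
the function `λ ↦ λ + (1/(1-α))·E[max(X − λ, 0)]` is minimized at any `λ*` with `F λ* = α`. -/
theorem stmt1 {Ω : Type*} [MeasurableSpace Ω] (ℙ : Measure Ω) [IsProbabilityMeasure ℙ]
    (X : Ω → ℝ) (hX : Integrable X ℙ) (α : ℝ) (hα : α ∈ Ioo (0 : ℝ) 1)
    (F : ℝ → ℝ) (hF : ∀ x, F x = (ℙ {ω | X ω ≤ x}).toReal)
    (hFc : Continuous F) (hFm : StrictMono F)
    (lamStar : ℝ) (hlam : F lamStar = α) :
    ∀ lam : ℝ,
      lamStar + (1 - α)⁻¹ * ∫ ω, max (X ω - lamStar) 0 ∂ℙ ≤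
        lam + (1 - α)⁻¹ * ∫ ω, max (X ω - lam) 0 ∂ℙ :=
  stmt1_general ℙ X hX α hα F hF lamStar hlam
end

section
/- For a random variable X with continuous strictly increasing CDF, the α-superquantile equals the conditional expectation of X given X ≥ Q_α(X): Q̄_α(X) = E[X | X ≥ Q_α(X)]. -/
/-!
`F` is the CDF of the law of `X`. Being continuous and running from `0` to `1`, it takes the
value `α` at `Q`, and `X` has no atom at `Q`, so `P(X ≥ Q) = 1 - α`. Since
`(X - Q)⁺ = (X - Q) 1_{X ≥ Q}`, we get `E[(X - Q)⁺] = E[X; X ≥ Q] - Q (1 - α)`; dividing by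
`1 - α` gives the identity.
-/

open MeasureTheory Set Filter Topology
open ProbabilityTheory (cdf cdf_le_one cdf_eq_real measure_cdf tendsto_cdf_atBot tendsto_cdf_atTop)

theorem apply_csInf_setOf_le_eq_of_continuous {F : ℝ → ℝ} (hF : Continuous F) {a b α : ℝ}
    (hbot : Tendsto F atBot (𝓝 a)) (htop : Tendsto F atTop (𝓝 b)) (ha : a < α) (hb : α < b) :
    F (sInf {z | α ≤ F z}) = α := by
  set S := {z | α ≤ F z}
  have hne : S.Nonempty := (htop.eventually (eventually_ge_nhds hb)).exists
  obtain ⟨w, hw⟩ := eventually_atBot.1 (hbot.eventually (eventually_lt_nhds ha))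
  have hbdd : BddBelow S := ⟨w, fun z hz => le_of_not_gt fun hzw => (hw z hzw.le).not_ge hz⟩
  refine le_antisymm ?_ ((isClosed_le continuous_const hF).csInf_mem hne hbdd)
  -- every point left of the infimum lies outside `S`, so `F < α` there; pass to the limit
  have hleft := (hF.tendsto (sInf S)).mono_left (nhdsWithin_le_nhds (s := Iio (sInf S)))
  refine le_of_tendsto hleft ?_
  exact eventually_nhdsWithin_of_forall fun z (hz : z < sInf S) =>
    (not_le.1 (show z ∉ S from notMem_of_lt_csInf hz hbdd)).le

theorem measureReal_Ici_eq_one_sub_cdf {μ : Measure ℝ} [IsProbabilityMeasure μ]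
    (h : Continuous (cdf μ)) (x : ℝ) : μ.real (Ici x) = 1 - cdf μ x := by
  have h₁ := (cdf μ).measure_Ici (tendsto_cdf_atTop μ) x
  rw [measure_cdf, h.continuousWithinAt.leftLim_eq] at h₁
  rw [measureReal_def, h₁, ENNReal.toReal_ofReal (sub_nonneg.2 (cdf_le_one μ x))]

theorem integral_max_sub_zero_eq {Ω : Type*} [MeasurableSpace Ω] {μ : Measure Ω}
    [IsFiniteMeasure μ] {X : Ω → ℝ} (hX : Integrable X μ) (c : ℝ) :
    ∫ ω, max (X ω - c) 0 ∂μ = ∫ ω in {ω | c ≤ X ω}, X ω ∂μ - c * μ.real {ω | c ≤ X ω} := by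
  have hs : NullMeasurableSet {ω | c ≤ X ω} μ :=
    nullMeasurableSet_le aemeasurable_const hX.aemeasurable
  have hmax : (fun ω => max (X ω - c) 0) = {ω | c ≤ X ω}.indicator (fun ω => X ω - c) := by
    ext ω
    by_cases h : c ≤ X ω
    · simp [h]
    · simp [h, (not_le.1 h).le]
  rw [hmax, integral_indicator₀ hs, integral_sub hX.integrableOn (integrable_const c).integrableOn,
    setIntegral_const, smul_eq_mul, mul_comm]

theorem stmt3_general {Ω : Type*} [MeasurableSpace Ω] (ℙ : Measure Ω) [IsProbabilityMeasure ℙ]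
    (X : Ω → ℝ) (hX : Integrable X ℙ) (α : ℝ) (hα : α ∈ Ioo (0 : ℝ) 1)
    (F : ℝ → ℝ) (hF : ∀ x, F x = (ℙ {ω | X ω ≤ x}).toReal)
    (hFc : Continuous F)
    (Q : ℝ) (hQ : Q = sInf {z : ℝ | α ≤ F z}) :
    Q + (1 - α)⁻¹ * ∫ ω, max (X ω - Q) 0 ∂ℙ =
      (∫ ω in {ω | Q ≤ X ω}, X ω ∂ℙ) / (ℙ {ω | Q ≤ X ω}).toReal := by
  set μ := ℙ.map X
  have : IsProbabilityMeasure μ := Measure.isProbabilityMeasure_map hX.aemeasurable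
  have hF_cdf : F = cdf μ := funext fun x => by
    rw [hF, cdf_eq_real, measureReal_def,
      Measure.map_apply_of_aemeasurable hX.aemeasurable measurableSet_Iic]
    rfl
  subst hF_cdf
  have hFQ : cdf μ Q = α := hQ ▸ apply_csInf_setOf_le_eq_of_continuous hFc
    (tendsto_cdf_atBot μ) (tendsto_cdf_atTop μ) hα.1 hα.2
  have hP : (ℙ {ω | Q ≤ X ω}).toReal = 1 - α := by
    rw [← hFQ, ← measureReal_Ici_eq_one_sub_cdf hFc, measureReal_def,
      Measure.map_apply_of_aemeasurable hX.aemeasurable measurableSet_Ici]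
    rfl
  have h1α : 1 - α ≠ 0 := (sub_pos.2 hα.2).ne'
  rw [integral_max_sub_zero_eq hX Q, measureReal_def, hP]
  field_simp
  ring

/-- For an integrable random variable `X` with continuous, strictly increasing CDF, the
α-superquantile equals the conditional expectation of `X` given `X ≥ Q_α`. -/
theorem stmt3 {Ω : Type*} [MeasurableSpace Ω] (ℙ : Measure Ω) [IsProbabilityMeasure ℙ]
    (X : Ω → ℝ) (hX : Integrable X ℙ) (α : ℝ) (hα : α ∈ Ioo (0 : ℝ) 1)
    (F : ℝ → ℝ) (hF : ∀ x, F x = (ℙ {ω | X ω ≤ x}).toReal)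
    (hFc : Continuous F) (hFm : StrictMono F)
    (Q : ℝ) (hQ : Q = sInf {z : ℝ | α ≤ F z}) :
    Q + (1 - α)⁻¹ * ∫ ω, max (X ω - Q) 0 ∂ℙ =
      (∫ ω in {ω | Q ≤ X ω}, X ω ∂ℙ) / (ℙ {ω | Q ≤ X ω}).toReal :=
  stmt3_general ℙ X hX α hα F hF hFc Q hQ
end

section
/- For a random variable X with continuous strictly increasing CDF, the α-superquantile equals the average of θ-quantiles over θ ∈ [α, 1]: Q̄_α(X) = (1/(1-α))·∫_α^1 Q_θ(X) dθ. -/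
/-!
The quantile function `Q` of a real law `μ` is the generalized inverse of its CDF `F`:
`Q θ ≤ x ↔ θ ≤ F x` for `θ ∈ (0, 1)`. Hence `Q` is monotone and transports the uniform
distribution on `(0, 1)` to `μ`, so `E[max (X - q) 0] = ∫₀¹ max (Q θ - q) 0 dθ`. With `q = Q α`,
monotonicity makes the integrand vanish below `α` and equal `Q θ - q` above it, which gives
`E[max (X - Q α) 0] = ∫_α^1 Q θ dθ - (1 - α) Q α`.
-/

open MeasureTheory Set Filter

theorem MonotoneOn.setIntegral_Ioo_max_sub_eq {g : ℝ → ℝ} {a b c : ℝ}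
    (hg : MonotoneOn g (Ioo a b)) (hc : c ∈ Ioo a b) :
    ∫ θ in Ioo a b, max (g θ - g c) 0 = ∫ θ in Ioo c b, (g θ - g c) := by
  rw [← inter_eq_right.2 (Ioo_subset_Ioo_left hc.1.le), ← setIntegral_indicator measurableSet_Ioo]
  refine setIntegral_congr_fun measurableSet_Ioo fun θ hθ => ?_
  rcases le_or_gt θ c with hθc | hθc
  · rw [indicator_of_notMem (fun h => h.1.not_ge hθc)]
    exact max_eq_right (sub_nonpos.2 (hg hθ hc hθc))
  · rw [indicator_of_mem (show θ ∈ Ioo c b from ⟨hθc, hθ.2⟩)]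
    exact max_eq_left (sub_nonneg.2 (hg hc hθ hθc.le))

namespace ProbabilityTheory

noncomputable def quantile (μ : Measure ℝ) (θ : ℝ) : ℝ := sInf {z | θ ≤ cdf μ z}

variable {μ : Measure ℝ}

theorem quantile_le_iff {θ : ℝ} (hθ : θ ∈ Ioo 0 1) (x : ℝ) :
    quantile μ θ ≤ x ↔ θ ≤ cdf μ x := by
  have hbdd : BddBelow {z | θ ≤ cdf μ z} := by
    obtain ⟨b, hb⟩ :=
      ((tendsto_cdf_atBot μ).eventually (eventually_lt_nhds hθ.1)).exists_forall_of_atBot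
    exact ⟨b, fun z hz => not_lt.1 fun hzb => (hb z hzb.le).not_ge hz⟩
  refine ⟨fun hx => ?_, fun hx => csInf_le hbdd hx⟩
  have hne : {z | θ ≤ cdf μ z}.Nonempty :=
    ((tendsto_cdf_atTop μ).eventually (eventually_ge_nhds hθ.2)).exists
  -- every `y > x` lies above a point of the set, so right-continuity gives `θ ≤ cdf μ x`
  refine ge_of_tendsto ((cdf μ).right_continuous x |>.mono Ioi_subset_Ici_self)
    (eventually_nhdsWithin_of_forall fun y (hy : x < y) => ?_)
  obtain ⟨z, hz, hzy⟩ := exists_lt_of_csInf_lt hne (hx.trans_lt hy)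
  exact hz.trans ((cdf μ).mono hzy.le)

theorem monotoneOn_quantile : MonotoneOn (quantile μ) (Ioo 0 1) := fun _ hθ _ hθ' hle =>
  (quantile_le_iff hθ _).2 (hle.trans ((quantile_le_iff hθ' _).1 le_rfl))

theorem aemeasurable_quantile : AEMeasurable (quantile μ) (volume.restrict (Ioo 0 1)) :=
  aemeasurable_restrict_of_monotoneOn measurableSet_Ioo monotoneOn_quantile

theorem map_quantile [IsProbabilityMeasure μ] :
    (volume.restrict (Ioo 0 1)).map (quantile μ) = μ := by
  refine (Measure.ext_of_Iic μ _ fun x => ?_).symm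
  have hpre : quantile μ ⁻¹' Iic x ∩ Ioo 0 1 = Ioc 0 (cdf μ x) \ {1} := by
    ext θ
    simp only [mem_inter_iff, mem_preimage, mem_Iic, mem_Ioo, Set.mem_sdiff, mem_Ioc,
      mem_singleton_iff]
    constructor
    · rintro ⟨hle, h0, h1⟩
      exact ⟨⟨h0, (quantile_le_iff ⟨h0, h1⟩ x).1 hle⟩, h1.ne⟩
    · rintro ⟨⟨h0, hle⟩, h1⟩
      have h1' : θ < 1 := lt_of_le_of_ne (hle.trans (cdf_le_one μ x)) h1
      exact ⟨(quantile_le_iff ⟨h0, h1'⟩ x).2 hle, h0, h1'⟩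
  rw [Measure.map_apply_of_aemeasurable aemeasurable_quantile measurableSet_Iic,
    Measure.restrict_apply' measurableSet_Ioo, hpre, measure_sdiff_null (measure_singleton 1),
    Real.volume_Ioc, sub_zero, ofReal_cdf]

theorem integrableOn_quantile [IsProbabilityMeasure μ] (hμ : Integrable id μ) :
    IntegrableOn (quantile μ) (Ioo 0 1) := by
  rw [← map_quantile (μ := μ)] at hμ
  exact (integrable_map_measure hμ.aestronglyMeasurable aemeasurable_quantile).1 hμ

theorem integral_max_sub_quantile [IsProbabilityMeasure μ] (hμ : Integrable id μ) {α : ℝ}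
    (hα : α ∈ Ioo 0 1) :
    ∫ x, max (x - quantile μ α) 0 ∂μ = (∫ θ in α..1, quantile μ θ) - (1 - α) * quantile μ α := by
  have hint : IntegrableOn (quantile μ) (Ioo α 1) :=
    (integrableOn_quantile hμ).mono_set (Ioo_subset_Ioo_left hα.1.le)
  set q := quantile μ α
  calc ∫ x, max (x - q) 0 ∂μ = ∫ θ in Ioo 0 1, max (quantile μ θ - q) 0 := by
        rw [← integral_map aemeasurable_quantile
          (by fun_prop : Continuous fun x => max (x - q) 0).aestronglyMeasurable, map_quantile]
    _ = ∫ θ in Ioo α 1, (quantile μ θ - q) := monotoneOn_quantile.setIntegral_Ioo_max_sub_eq hα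
    _ = _ := by
      rw [integral_sub hint (integrableOn_const measure_Ioo_lt_top.ne), setIntegral_const,
        Real.volume_real_Ioo_of_le hα.2.le, smul_eq_mul, intervalIntegral.integral_of_le hα.2.le,
        integral_Ioc_eq_integral_Ioo]

end ProbabilityTheory

open ProbabilityTheory (cdf cdf_eq_real quantile integral_max_sub_quantile)

theorem stmt4_general {Ω : Type*} [MeasurableSpace Ω] (ℙ : Measure Ω) [IsProbabilityMeasure ℙ]
    (X : Ω → ℝ) (hX : Integrable X ℙ) (α : ℝ) (hα : α ∈ Ioo (0 : ℝ) 1)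
    (F : ℝ → ℝ) (hF : ∀ x, F x = (ℙ {ω | X ω ≤ x}).toReal)
    (Q : ℝ → ℝ) (hQ : ∀ θ, Q θ = sInf {z : ℝ | θ ≤ F z}) :
    Q α + (1 - α)⁻¹ * ∫ ω, max (X ω - Q α) 0 ∂ℙ =
      (1 - α)⁻¹ * ∫ θ in α..1, Q θ := by
  have hXm : AEMeasurable X ℙ := hX.aemeasurable
  have := Measure.isProbabilityMeasure_map hXm
  have hF_cdf : F = cdf (ℙ.map X) := funext fun x => by
    rw [hF, cdf_eq_real, map_measureReal_apply_of_aemeasurable hXm measurableSet_Iic]; rfl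
  obtain rfl : Q = quantile (ℙ.map X) := funext fun θ => by rw [hQ, hF_cdf, quantile]
  have hint : Integrable id (ℙ.map X) := (integrable_map_measure aestronglyMeasurable_id hXm).2 hX
  rw [← integral_map hXm
      (by fun_prop : Continuous fun x => max (x - quantile (ℙ.map X) α) 0).aestronglyMeasurable,
    integral_max_sub_quantile hint hα]
  have : 1 - α ≠ 0 := (sub_pos.2 hα.2).ne'
  field_simp
  ring

/-- For an integrable random variable `X` with continuous, strictly increasing CDF, the
α-superquantile equals the average of the θ-quantiles over `θ ∈ [α, 1]`. -/
theorem stmt4 {Ω : Type*} [MeasurableSpace Ω] (ℙ : Measure Ω) [IsProbabilityMeasure ℙ]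
    (X : Ω → ℝ) (hX : Integrable X ℙ) (α : ℝ) (hα : α ∈ Ioo (0 : ℝ) 1)
    (F : ℝ → ℝ) (hF : ∀ x, F x = (ℙ {ω | X ω ≤ x}).toReal)
    (hFc : Continuous F) (hFm : StrictMono F)
    (Q : ℝ → ℝ) (hQ : ∀ θ, Q θ = sInf {z : ℝ | θ ≤ F z}) :
    Q α + (1 - α)⁻¹ * ∫ ω, max (X ω - Q α) 0 ∂ℙ =
      (1 - α)⁻¹ * ∫ θ in α..1, Q θ :=
  stmt4_general ℙ X hX α hα F hF Q hQ
end

section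
/- The derivative with respect to α of the α-superquantile is given by ∂Q̄_α(X)/∂α = (1/(1-α)²)·E[max(X − Q_α(X), 0)], and in particular is nonnegative. -/
/-!
Write `φ l = E[(X - l)⁺]`, a 1-Lipschitz function of `l`. The subgradient inequality
`φ m ≥ φ Q - (m - Q) P(X > Q)` shows that the `b`-quantile `Q_b` minimizes
`l ↦ l + (1 - b)⁻¹ φ l`. Comparing the objectives for `b` and `α` at the two minimizers
`Q_b` and `Q_α` squeezes the increment of the minimum value between
`((1 - b)⁻¹ - (1 - α)⁻¹) φ(Q_b)` and `((1 - b)⁻¹ - (1 - α)⁻¹) φ(Q_α)`; since `Q_b → Q_α`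
(the CDF is strictly increasing), this is the envelope theorem, and the derivative is
that of `(1 - b)⁻¹` times `φ(Q_α)`.
-/

open MeasureTheory Set Filter Topology Asymptotics

theorem hasDerivAt_envelope_add_mul {β : Type*} {h φ : β → ℝ} {g : ℝ → ℝ} {q : ℝ → β}
    {α g' : ℝ} (hg : HasDerivAt g g' α)
    (hφq : Tendsto (fun b => φ (q b)) (𝓝 α) (𝓝 (φ (q α))))
    (hmin : ∀ᶠ b in 𝓝 α, ∀ l, h (q b) + g b * φ (q b) ≤ h l + g b * φ l) :
    HasDerivAt (fun b => h (q b) + g b * φ (q b)) (g' * φ (q α)) α := by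
  set V := fun b => h (q b) + g b * φ (q b)
  have hgap : (fun b => (g b - g α) * (φ (q b) - φ (q α))) =o[𝓝 α] fun b => b - α := by
    simpa using hg.isBigO_sub.mul_isLittleO
      ((isLittleO_one_iff ℝ).2 (tendsto_sub_nhds_zero_iff.2 hφq))
  -- test the minimality at `b` with `q α` and at `α` with `q b`
  have hsandwich : (fun b => V b - V α - (g b - g α) * φ (q α)) =O[𝓝 α]
      fun b => (g b - g α) * (φ (q b) - φ (q α)) := by
    refine IsBigO.of_bound 1 ?_
    filter_upwards [hmin] with b hb
    have hup := hb (q α)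
    have hlow := hmin.self_of_nhds (q b)
    simp only [V, Real.norm_eq_abs, one_mul]
    rw [abs_le]
    constructor <;> nlinarith [neg_abs_le ((g b - g α) * (φ (q b) - φ (q α))),
      le_abs_self ((g b - g α) * (φ (q b) - φ (q α)))]
  have hlin : (fun b => (g b - g α - (b - α) * g') * φ (q α)) =o[𝓝 α] fun b => b - α := by
    simpa using (hasDerivAt_iff_isLittleO.1 hg).mul_isBigO
      (isBigO_const_const (φ (q α)) one_ne_zero (𝓝 α))
  rw [hasDerivAt_iff_isLittleO]
  refine ((hsandwich.trans_isLittleO hgap).add hlin).congr_left fun b => ?_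
  simp only [V, smul_eq_mul]
  ring

theorem StrictMono.csInf_setOf_apply_le_apply {α β : Type*} [ConditionallyCompleteLinearOrder α]
    [Preorder β] {F : α → β} (hF : StrictMono F) (z : α) :
    sInf {x | F z ≤ F x} = z := by
  simp_rw [hF.le_iff_le]
  exact csInf_Ici

theorem apply_csInf_setOf_le {F : ℝ → ℝ} (hFc : Continuous F) (hFm : StrictMono F)
    (h0 : Tendsto F atBot (𝓝 0)) (h1 : Tendsto F atTop (𝓝 1)) {b : ℝ} (hb : b ∈ Ioo 0 1) :
    F (sInf {x | b ≤ F x}) = b := by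
  obtain ⟨l, hl⟩ := (h0.eventually_le_const hb.1).exists
  obtain ⟨u, hu⟩ := (h1.eventually_const_le hb.2).exists
  obtain ⟨z, rfl⟩ := intermediate_value_univ l u hFc ⟨hl, hu⟩
  rw [hFm.csInf_setOf_apply_le_apply]

theorem StrictMono.tendsto_of_eventually_apply_eq {α β : Type*} [LinearOrder α]
    [TopologicalSpace α] [OrderTopology α] [LinearOrder β] [TopologicalSpace β] [OrderTopology β]
    {F : α → β} {q : β → α} (hF : StrictMono F) {b₀ : β} (hq : ∀ᶠ b in 𝓝 b₀, F (q b) = b) :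
    Tendsto q (𝓝 b₀) (𝓝 (q b₀)) := by
  have hq₀ := hq.self_of_nhds
  refine tendsto_order.2 ⟨fun l hl => ?_, fun u hu => ?_⟩
  · filter_upwards [hq, eventually_gt_nhds (hq₀ ▸ hF hl)] with b hb hlb
    rwa [← hF.lt_iff_lt, hb]
  · filter_upwards [hq, eventually_lt_nhds (hq₀ ▸ hF hu)] with b hb hub
    rwa [← hF.lt_iff_lt, hb]

section

variable {Ω : Type*} [MeasurableSpace Ω] {μ : Measure Ω} {X : Ω → ℝ}

theorem ProbabilityTheory.cdf_map_apply [IsProbabilityMeasure μ] (hX : AEMeasurable X μ)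
    (x : ℝ) : ProbabilityTheory.cdf (μ.map X) x = μ.real {ω | X ω ≤ x} := by
  have := Measure.isProbabilityMeasure_map (μ := μ) hX
  rw [ProbabilityTheory.cdf_eq_real, map_measureReal_apply_of_aemeasurable hX measurableSet_Iic]
  rfl

theorem integrable_max_sub_const [IsFiniteMeasure μ] (hX : Integrable X μ) (l : ℝ) :
    Integrable (fun ω => max (X ω - l) 0) μ :=
  (hX.sub (integrable_const l)).pos_part

theorem lipschitzWith_integral_max_sub [IsProbabilityMeasure μ] (hX : Integrable X μ) :
    LipschitzWith 1 fun l => ∫ ω, max (X ω - l) 0 ∂μ := by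
  refine LipschitzWith.of_dist_le_mul fun l m => ?_
  rw [NNReal.coe_one, one_mul, Real.dist_eq, Real.dist_eq,
    ← integral_sub (integrable_max_sub_const hX l) (integrable_max_sub_const hX m)]
  have hpt : ∀ ω, ‖max (X ω - l) 0 - max (X ω - m) 0‖ ≤ |l - m| := fun ω => by
    simpa [abs_sub_comm m] using abs_max_sub_max_le_abs (X ω - l) (X ω - m) 0
  simpa using norm_integral_le_of_norm_le_const (μ := μ) (Eventually.of_forall hpt)

theorem integral_max_sub_sub_le [IsProbabilityMeasure μ] (hX : Integrable X μ) (Q m : ℝ) :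
    ∫ ω, max (X ω - Q) 0 ∂μ - (m - Q) * (1 - μ.real {ω | X ω ≤ Q}) ≤
      ∫ ω, max (X ω - m) 0 ∂μ := by
  set S := {ω | X ω ≤ Q}
  have hS : NullMeasurableSet S μ := nullMeasurableSet_le hX.aemeasurable aemeasurable_const
  have hpt : ∀ ω, max (X ω - Q) 0 - (m - Q) + S.indicator (fun _ => m - Q) ω ≤
      max (X ω - m) 0 := by
    intro ω
    by_cases hω : X ω ≤ Q
    · simp [S, hω]
    · rw [indicator_of_notMem (s := S) hω, max_eq_left (by linarith)]
      linarith [le_max_left (X ω - m) 0]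
  have hf : Integrable (fun ω => max (X ω - Q) 0 - (m - Q)) μ :=
    (integrable_max_sub_const hX Q).sub (integrable_const _)
  calc ∫ ω, max (X ω - Q) 0 ∂μ - (m - Q) * (1 - μ.real S)
      = ∫ ω, (max (X ω - Q) 0 - (m - Q) + S.indicator (fun _ => m - Q) ω) ∂μ := by
        rw [integral_add hf ((integrable_const _).indicator₀ hS),
          integral_sub (integrable_max_sub_const hX Q) (integrable_const _),
          integral_indicator₀ hS, setIntegral_const, integral_const]
        simp only [probReal_univ, smul_eq_mul]
        ring
    _ ≤ ∫ ω, max (X ω - m) 0 ∂μ :=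
        integral_mono (hf.add ((integrable_const _).indicator₀ hS))
          (integrable_max_sub_const hX m) hpt

theorem add_inv_mul_integral_max_sub_le [IsProbabilityMeasure μ] (hX : Integrable X μ)
    {a Q : ℝ} (ha : a < 1) (hQ : μ.real {ω | X ω ≤ Q} = a) (m : ℝ) :
    Q + (1 - a)⁻¹ * ∫ ω, max (X ω - Q) 0 ∂μ ≤ m + (1 - a)⁻¹ * ∫ ω, max (X ω - m) 0 ∂μ := by
  have h1a : 0 < 1 - a := sub_pos.2 ha
  have := mul_le_mul_of_nonneg_left (integral_max_sub_sub_le hX Q m) (inv_nonneg.2 h1a.le)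
  rw [hQ, mul_sub, ← mul_assoc, mul_comm _ (m - Q), mul_assoc, inv_mul_cancel₀ h1a.ne',
    mul_one] at this
  linarith

end

/-- The derivative of the α-superquantile (expressed as the minimum value of the
Rockafellar–Uryasev objective) with respect to `α` is `(1/(1-α)²)·E[max(X − Q_α, 0)]`,
which is nonnegative. -/
theorem stmt8 {Ω : Type*} [MeasurableSpace Ω] (ℙ : Measure Ω) [IsProbabilityMeasure ℙ]
    (X : Ω → ℝ) (hX : Integrable X ℙ) (α : ℝ) (hα : α ∈ Ioo (0 : ℝ) 1)
    (F : ℝ → ℝ) (hF : ∀ x, F x = (ℙ {ω | X ω ≤ x}).toReal)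
    (hFc : Continuous F) (hFm : StrictMono F)
    (Q : ℝ) (hQ : Q = sInf {z : ℝ | α ≤ F z}) :
    HasDerivAt
      (fun a : ℝ =>
        sInf (Set.range fun lam : ℝ => lam + (1 - a)⁻¹ * ∫ ω, max (X ω - lam) 0 ∂ℙ))
      (((1 - α)⁻¹) ^ 2 * ∫ ω, max (X ω - Q) 0 ∂ℙ) α ∧
      0 ≤ ((1 - α)⁻¹) ^ 2 * ∫ ω, max (X ω - Q) 0 ∂ℙ := by
  set φ := fun l : ℝ => ∫ ω, max (X ω - l) 0 ∂ℙ
  set q := fun b : ℝ => sInf {z : ℝ | b ≤ F z}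
  have hFcdf : F = ProbabilityTheory.cdf (ℙ.map X) := funext fun x => by
    rw [hF, ProbabilityTheory.cdf_map_apply hX.aemeasurable]; rfl
  have hq : ∀ b ∈ Ioo (0 : ℝ) 1, F (q b) = b := fun b hb =>
    apply_csInf_setOf_le hFc hFm (hFcdf ▸ ProbabilityTheory.tendsto_cdf_atBot _)
      (hFcdf ▸ ProbabilityTheory.tendsto_cdf_atTop _) hb
  have hmin : ∀ b ∈ Ioo (0 : ℝ) 1, ∀ l, q b + (1 - b)⁻¹ * φ (q b) ≤ l + (1 - b)⁻¹ * φ l :=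
    fun b hb => add_inv_mul_integral_max_sub_le hX hb.2 ((hF _).symm.trans (hq b hb))
  have hg : HasDerivAt (fun b : ℝ => (1 - b)⁻¹) ((1 - α)⁻¹ ^ 2) α := by
    simpa using ((hasDerivAt_id α).const_sub 1).fun_inv (sub_pos.2 hα.2).ne'
  have hnhds : Ioo (0 : ℝ) 1 ∈ 𝓝 α := Ioo_mem_nhds hα.1 hα.2
  have hderiv : HasDerivAt (fun b => q b + (1 - b)⁻¹ * φ (q b)) ((1 - α)⁻¹ ^ 2 * φ (q α)) α :=
    hasDerivAt_envelope_add_mul (h := id) hg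
      (((lipschitzWith_integral_max_sub hX).continuous.tendsto _).comp
        (hFm.tendsto_of_eventually_apply_eq (eventually_of_mem hnhds hq)))
      (eventually_of_mem hnhds hmin)
  subst hQ
  refine ⟨hderiv.congr_of_eventuallyEq ?_, by positivity⟩
  filter_upwards [hnhds] with b hb
  exact IsLeast.csInf_eq ⟨⟨q b, rfl⟩, by rintro _ ⟨l, rfl⟩; exact hmin b hb l⟩
end

section
/- For the standard logistic distribution with CDF F(x) = 1/(1 + e^{-x/s}) with scale s > 0, the α-quantile is Q_α = s·ln(α/(1-α)) and the α-superquantile equals s·H(α)/(1-α), where H(α) = −α·ln α − (1-α)·ln(1-α). -/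
/-!
The quantile function of the logistic law is `s` times the logit `θ ↦ log (θ / (1 - θ))`,
and the logit is the derivative of minus the binary entropy `H`. Since `H 1 = 0`,
integrating over `[α, 1]` leaves `s · H α`.
-/

open Set Real intervalIntegral MeasureTheory

/-- Both sides vanish at `θ = 0` and `θ = 1` because `log 0 = 0`. -/
lemma log_div_one_sub (θ : ℝ) : log (θ / (1 - θ)) = log θ - log (1 - θ) := by
  rcases eq_or_ne θ 0 with rfl | hθ0
  · simp
  rcases eq_or_ne θ 1 with rfl | hθ1
  · simp
  exact log_div hθ0 (sub_ne_zero.2 hθ1.symm)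

lemma binEntropy_eq_neg_mul_log_sub (p : ℝ) :
    binEntropy p = -p * log p - (1 - p) * log (1 - p) := by
  simp only [binEntropy, log_inv]
  ring

lemma one_div_one_add_exp_neg_log_div_one_sub {α : ℝ} (hα : α ∈ Ioo (0 : ℝ) 1) :
    1 / (1 + exp (-log (α / (1 - α)))) = α := by
  have hα0 : α ≠ 0 := hα.1.ne'
  have h1α : 1 - α ≠ 0 := sub_ne_zero.2 hα.2.ne'
  rw [exp_neg, exp_log (div_pos hα.1 (sub_pos.2 hα.2)), inv_div]
  field_simp
  ring

theorem integral_log_div_one_sub (a b : ℝ) :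
    ∫ θ in a..b, log (θ / (1 - θ)) = binEntropy a - binEntropy b := by
  have h_one_sub : IntervalIntegrable (fun θ => log (1 - θ)) volume a b := by
    simpa using (intervalIntegrable_log' (a := 1 - a) (b := 1 - b)).comp_sub_left 1
  simp_rw [log_div_one_sub]
  rw [integral_sub intervalIntegrable_log' h_one_sub, integral_comp_sub_left log 1,
    integral_log, integral_log, binEntropy_eq_neg_mul_log_sub, binEntropy_eq_neg_mul_log_sub]
  ring

/-- For the logistic distribution with scale `s > 0`: the α-quantile is `s·ln(α/(1-α))` and the
α-superquantile equals `s·H(α)/(1-α)` with `H(α) = −α ln α − (1-α) ln(1-α)`. -/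
theorem stmt11 (s α : ℝ) (hs : 0 < s) (hα : α ∈ Ioo (0 : ℝ) 1) :
    (1 / (1 + Real.exp (-(s * Real.log (α / (1 - α))) / s)) = α) ∧
      (1 - α)⁻¹ * ∫ θ in α..1, s * Real.log (θ / (1 - θ)) =
        s * (-α * Real.log α - (1 - α) * Real.log (1 - α)) / (1 - α) := by
  constructor
  · rw [neg_div, mul_div_cancel_left₀ _ hs.ne']
    exact one_div_one_add_exp_neg_log_div_one_sub hα
  · rw [intervalIntegral.integral_const_mul, integral_log_div_one_sub, binEntropy_one, sub_zero,
      binEntropy_eq_neg_mul_log_sub]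
    ring
end
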